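/- arXiv:1408.3317 — 7 statements merged into one kernel-verified Lean document; each statement's English description precedes it below -/
import Mathlib

section
/- Validity is closed under parts: if k ⊨ g and f ∈ part(x, g), where x is the initial state of k, then k ⊨ f. -/
/-- A Kripke structure with labeled transitions (Kripke-LTS). -/
structure KLTS (P E : Type) where
  X : Type
  L : X → Set P
  T : X → E → X → Prop
  init : X

/-- State-based (Boolean) formulas. -/
inductive BF (P : Type) where
  | tt : BF P
  | ff : BF P
  | atom : P → BF P
  | neg : BF P → BF P
  | and : BF P → BF P → BF P
  | or : BF P → BF P → BF P

/-- Satisfaction of a state-based formula by a label set. -/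
def BSat {P : Type} (A : Set P) : BF P → Prop
  | .tt => True
  | .ff => False
  | .atom p => p ∈ A
  | .neg b => ¬ BSat A b
  | .and b c => BSat A b ∧ BSat A c
  | .or b c => BSat A b ∨ BSat A c

/-- The modal requirement logic F. -/
inductive F (P E : Type) where
  | base : BF P → F P E
  | and : F P E → F P E → F P E
  | or : BF P → F P E → F P E
  | box : E → F P E → F P E
  | dia : E → F P E → F P E
  | inv : F P E → F P E
  | reach : BF P → F P E
  | dlf : F P E

variable {P E : Type}

/-- Reachability (reflexive-transitive closure, ignoring event labels). -/
def KLTS.Star (k : KLTS P E) : k.X → k.X → Prop :=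
  Relation.ReflTransGen (fun a b => ∃ e, k.T a e b)

/-- Validity of a modal formula at a Kripke-LTS. -/
def FSat : KLTS P E → F P E → Prop
  | k, .base b => BSat (k.L k.init) b
  | k, .and f g => FSat k f ∧ FSat k g
  | k, .or b f => BSat (k.L k.init) b ∨ FSat k f
  | k, .box e f => ∀ x', k.T k.init e x' → FSat ⟨k.X, k.L, k.T, x'⟩ f
  | k, .dia e f => ∃ x', k.T k.init e x' ∧ FSat ⟨k.X, k.L, k.T, x'⟩ f
  | k, .inv f => ∀ x', k.Star k.init x' → FSat ⟨k.X, k.L, k.T, x'⟩ f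
  | k, .reach b => ∃ x', k.Star k.init x' ∧ BSat (k.L x') b
  | k, .dlf => ∃ e x', k.T k.init e x'

/-- R is a simulation relation between k' and k. -/
def SimRel (k' k : KLTS P E) (R : k'.X → k.X → Prop) : Prop :=
  ∀ y' y, R y' y → k'.L y' = k.L y ∧
    ∀ e z', k'.T y' e z' → ∃ z, k.T y e z ∧ R z' z

/-- Simulation preorder. -/
def Sim (k' k : KLTS P E) : Prop :=
  ∃ R : k'.X → k.X → Prop, R k'.init k.init ∧ SimRel k' k R

/-- R is a partial bisimulation relation (w.r.t. uncontrollable events U). -/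
def PBisRel (U : Set E) (k' k : KLTS P E) (R : k'.X → k.X → Prop) : Prop :=
  ∀ y' y, R y' y → k'.L y' = k.L y ∧
    (∀ e z', k'.T y' e z' → ∃ z, k.T y e z ∧ R z' z) ∧
    (∀ e z, e ∈ U → k.T y e z → ∃ z', k'.T y' e z' ∧ R z' z)

/-- Partial bisimulation preorder. -/
def PBis (U : Set E) (k' k : KLTS P E) : Prop :=
  ∃ R : k'.X → k.X → Prop, R k'.init k.init ∧ PBisRel U k' k R

/-- The sub-formula relation. -/
inductive SubF : F P E → F P E → Prop where
  | refl (f : F P E) : SubF f f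
  | andL {f g h : F P E} : SubF f g → SubF f (.and g h)
  | andR {f g h : F P E} : SubF f h → SubF f (.and g h)
  | inv {f g : F P E} : SubF f g → SubF f (.inv g)

/-- The state-relative part relation. -/
inductive PartF {X : Type} (L : X → Set P) (x : X) : F P E → F P E → Prop where
  | refl (f : F P E) : PartF L x f f
  | andL {f g h : F P E} : PartF L x f g → PartF L x f (.and g h)
  | andR {f g h : F P E} : PartF L x f h → PartF L x f (.and g h)
  | or {b : BF P} {f g : F P E} : ¬ BSat (L x) b → PartF L x f g → PartF L x f (.or b g)
  | inv {f g : F P E} : PartF L x f g → PartF L x f (.inv g)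

/-- The starting point of synthesis: transition relation over state-formula pairs. -/
inductive Step0 (k : KLTS P E) : k.X × F P E → E → k.X × F P E → Prop where
  | base {x x' : k.X} {e : E} {b : BF P} :
      k.T x e x' → Step0 k (x, .base b) e (x', .base .tt)
  | and_sub {x x' : k.X} {e : E} {f g f' g' : F P E} :
      Step0 k (x, f) e (x', f') → Step0 k (x, g) e (x', g') → SubF g' f' →
      Step0 k (x, .and f g) e (x', f')
  | and_nsub {x x' : k.X} {e : E} {f g f' g' : F P E} :
      Step0 k (x, f) e (x', f') → Step0 k (x, g) e (x', g') → ¬ SubF g' f' →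
      Step0 k (x, .and f g) e (x', .and f' g')
  | or_true {x x' : k.X} {e : E} {b : BF P} {f : F P E} :
      k.T x e x' → BSat (k.L x) b → Step0 k (x, .or b f) e (x', .base .tt)
  | or_step {x x' : k.X} {e : E} {b : BF P} {f f' : F P E} :
      Step0 k (x, f) e (x', f') → Step0 k (x, .or b f) e (x', f')
  | box_same {x x' : k.X} {e : E} {f : F P E} :
      k.T x e x' → Step0 k (x, .box e f) e (x', f)
  | box_other {x x' : k.X} {e e' : E} {f : F P E} :
      k.T x e x' → e ≠ e' → Step0 k (x, .box e' f) e (x', .base .tt)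
  | dia_same {x x' : k.X} {e : E} {f : F P E} :
      k.T x e x' → Step0 k (x, .dia e f) e (x', f)
  | dia_other {x x' : k.X} {e e' : E} {f : F P E} :
      k.T x e x' → Step0 k (x, .dia e' f) e (x', .base .tt)
  | inv_sub {x x' : k.X} {e : E} {f f' : F P E} :
      Step0 k (x, f) e (x', f') → SubF f' (.inv f) →
      Step0 k (x, .inv f) e (x', .inv f)
  | inv_nsub {x x' : k.X} {e : E} {f f' : F P E} :
      Step0 k (x, f) e (x', f') → ¬ SubF f' (.inv f) →
      Step0 k (x, .inv f) e (x', .and (.inv f) f')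
  | reach_true {x x' : k.X} {e : E} {b : BF P} :
      k.T x e x' → Step0 k (x, .reach b) e (x', .base .tt)
  | reach_self {x x' : k.X} {e : E} {b : BF P} :
      k.T x e x' → Step0 k (x, .reach b) e (x', .reach b)
  | dlf {x x' : k.X} {e : E} :
      k.T x e x' → Step0 k (x, .dlf) e (x', .base .tt)

/-- Synthesizability of a formula at a state-formula pair, w.r.t. a relation Tn. -/
inductive Syn (k : KLTS P E) (Tn : k.X × F P E → E → k.X × F P E → Prop) :
    k.X × F P E → F P E → Prop where
  | base {x : k.X} {g : F P E} {b : BF P} :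
      BSat (k.L x) b → Syn k Tn (x, g) (.base b)
  | and {p : k.X × F P E} {f1 f2 : F P E} :
      Syn k Tn p f1 → Syn k Tn p f2 → Syn k Tn p (.and f1 f2)
  | orl {x : k.X} {g : F P E} {b : BF P} {f : F P E} :
      BSat (k.L x) b → Syn k Tn (x, g) (.or b f)
  | orr {p : k.X × F P E} {b : BF P} {f : F P E} :
      Syn k Tn p f → Syn k Tn p (.or b f)
  | box {p : k.X × F P E} {e : E} {f : F P E} : Syn k Tn p (.box e f)
  | dia {x x' : k.X} {g g' : F P E} {e : E} {f : F P E} :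
      Syn k Tn (x', g') f → Tn (x, g) e (x', g') → PartF k.L x' f g' →
      Syn k Tn (x, g) (.dia e f)
  | inv {p : k.X × F P E} {f : F P E} :
      Syn k Tn p f → Syn k Tn p (.inv f)
  | reach {x x' : k.X} {g g' : F P E} {b : BF P} :
      Relation.ReflTransGen (fun a c => ∃ e, Tn a e c) (x, g) (x', g') →
      BSat (k.L x') b → Syn k Tn (x, g) (.reach b)
  | dlf {p p' : k.X × F P E} {e : E} :
      Tn p e p' → Syn k Tn p .dlf

/-- The n-th iterate of the synthesis construction. -/
def StepN (k : KLTS P E) (U : Set E) :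
    ℕ → (k.X × F P E → E → k.X × F P E → Prop)
  | 0 => Step0 k
  | n + 1 => fun p e p' =>
      StepN k U n p e p' ∧ (e ∈ U ∨ Syn k (StepN k U n) p p.2)

/-- The synthesized system model S^n_{k,f}. -/
def Synth (k : KLTS P E) (U : Set E) (f : F P E) (n : ℕ) : KLTS P E :=
  ⟨k.X × F P E, fun p => k.L p.1, StepN k U n, (k.init, f)⟩

/-- Completeness: synthesizability holds at every reachable state-formula pair. -/
def Complete (k : KLTS P E) (U : Set E) (n : ℕ) (f : F P E) : Prop :=
  ∀ p' : k.X × F P E,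
    Relation.ReflTransGen (fun a c => ∃ e, StepN k U n a e c) (k.init, f) p' →
    Syn k (StepN k U n) p' p'.2

theorem FSat.of_inv {P E : Type} {k : KLTS P E} {f : F P E} (h : FSat k (.inv f)) : FSat k f :=
  h k.init .refl

/-- Validity is closed under parts. -/
theorem fsat_of_partF {P E : Type} (k : KLTS P E) (f g : F P E)
    (hg : FSat k g) (hp : PartF k.L k.init f g) : FSat k f := by
  induction hp with
  | refl => exact hg
  | andL _ ih => exact ih hg.1
  | andR _ ih => exact ih hg.2
  | or hb _ ih => exact ih (hg.resolve_left hb)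
  | inv _ ih => exact ih hg.of_inv
end

section
/- Synthesizability is closed under parts: if (x,h) ↑ g and f ∈ part(x, g), then (x,h) ↑ f. -/
variable {P E : Type}

namespace Syn

variable {k : KLTS P E} {Tn : k.X × F P E → E → k.X × F P E → Prop}

theorem and_iff {p : k.X × F P E} {f₁ f₂ : F P E} :
    Syn k Tn p (.and f₁ f₂) ↔ Syn k Tn p f₁ ∧ Syn k Tn p f₂ :=
  ⟨fun h => by cases h with | and h₁ h₂ => exact ⟨h₁, h₂⟩, fun h => .and h.1 h.2⟩

theorem or_iff {x : k.X} {g : F P E} {b : BF P} {f : F P E} :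
    Syn k Tn (x, g) (.or b f) ↔ BSat (k.L x) b ∨ Syn k Tn (x, g) f := by
  constructor
  · intro h
    cases h with
    | orl hb => exact .inl hb
    | orr hf => exact .inr hf
  · rintro (hb | hf)
    exacts [.orl hb, .orr hf]

theorem inv_iff {p : k.X × F P E} {f : F P E} :
    Syn k Tn p (.inv f) ↔ Syn k Tn p f :=
  ⟨fun h => by cases h with | inv hf => exact hf, .inv⟩

end Syn

/-- Synthesizability is closed under parts (Lemma part_syn). -/
theorem syn_of_partF {P E : Type} (k : KLTS P E)
    (Tn : k.X × F P E → E → k.X × F P E → Prop)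
    (x : k.X) (h g f : F P E)
    (hs : Syn k Tn (x, h) g) (hp : PartF k.L x f g) : Syn k Tn (x, h) f := by
  induction hp with
  | refl => exact hs
  | andL _ ih => exact ih (Syn.and_iff.1 hs).1
  | andR _ ih => exact ih (Syn.and_iff.1 hs).2
  | or hb _ ih => exact ih ((Syn.or_iff.1 hs).resolve_left hb)
  | inv _ ih => exact ih (Syn.inv_iff.1 hs)
end

section
/- The set of formula reducts of any formula f in the requirement logic F, under the formula reduction relation induced by the synthesis starting-point rules, is finite: there exists a finite set D ⊆ F containing f that is closed under reduction. -/
variable {P E : Type}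

/-!
A reduct of `f ∧ g` is a reduct of `f` or a conjunction of reducts of `f` and `g`, so the
reducts of a conjunction stay within the finite set `D_f ∪ D_f ∧ D_g`. The only way formulas
grow is the invariant: a reduct of `□f` has the shape `□f ∧ f₁ ∧ ⋯ ∧ fₙ` with every `fᵢ` a
reduct of `f`. A conjunct is only added when it is not yet a sub-formula, so the `fᵢ` are
pairwise distinct, and there are finitely many such lists.
-/

theorem Set.finite_setOf_nodup_forall_mem {α : Type*} {s : Set α} (hs : s.Finite) :
    {l : List α | l.Nodup ∧ ∀ a ∈ l, a ∈ s}.Finite := by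
  have := hs.fintype
  refine (Set.finite_range fun l : {l : List s // l.Nodup} => l.1.map Subtype.val).subset ?_
  rintro l ⟨hnd, hl⟩
  exact ⟨⟨l.pmap Subtype.mk hl, hnd.pmap fun _ _ _ _ => congrArg Subtype.val⟩,
    by simp [List.map_pmap]⟩

namespace F

def andList (f : F P E) (l : List (F P E)) : F P E := l.foldl .and f

theorem andList_concat (f a : F P E) (l : List (F P E)) :
    andList f (l ++ [a]) = .and (andList f l) a := by
  simp [andList]

theorem subF_andList_of_mem {a : F P E} (f : F P E) {l : List (F P E)} (h : a ∈ l) :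
    SubF a (andList f l) := by
  induction l using List.reverseRecOn with
  | nil => simp at h
  | append_singleton l b ih =>
    rw [andList_concat]
    rcases List.mem_append.1 h with h | h
    · exact .andL (ih h)
    · rw [List.mem_singleton.1 h]
      exact .andR (.refl b)

def reducts : F P E → Set (F P E)
  | .base b => {.base b, .base .tt}
  | .and f g => reducts f ∪ Set.image2 .and (reducts f) (reducts g)
  | .or b f => insert (.or b f) (insert (.base .tt) (reducts f))
  | .box e f => insert (.box e f) (insert (.base .tt) (reducts f))
  | .dia e f => insert (.dia e f) (insert (.base .tt) (reducts f))
  | .inv f => andList (.inv f) '' {l | l.Nodup ∧ ∀ a ∈ l, a ∈ reducts f}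
  | .reach b => {.reach b, .base .tt}
  | .dlf => {.dlf, .base .tt}

theorem mem_reducts_self (f : F P E) : f ∈ reducts f := by
  induction f with
  | and f g ihf ihg => exact .inr (Set.mem_image2_of_mem ihf ihg)
  | inv f => exact ⟨[], by simp, rfl⟩
  | _ => simp [reducts]

theorem finite_reducts (f : F P E) : (reducts f).Finite := by
  induction f with
  | base | reach | dlf => exact (Set.finite_singleton _).insert _
  | and f g ihf ihg => exact ihf.union (ihf.image2 _ ihg)
  | or _ _ ih | box _ _ ih | dia _ _ ih => exact (ih.insert _).insert _
  | inv f ih => exact (Set.finite_setOf_nodup_forall_mem ih).image _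

end F

open F

def ReductClosed (k : KLTS P E) (D : Set (F P E)) : Prop :=
  ∀ g ∈ D, ∀ (x x' : k.X) (e : E) (g' : F P E), Step0 k (x, g) e (x', g') → g' ∈ D

namespace ReductClosed

variable {k : KLTS P E} {D D' : Set (F P E)}

theorem singleton_tt (k : KLTS P E) : ReductClosed k {.base .tt} := by
  rintro _ rfl x x' e g' h
  cases h
  rfl

theorem union (hD : ReductClosed k D) (hD' : ReductClosed k D') : ReductClosed k (D ∪ D') := by
  rintro g (hg | hg) x x' e g' h
  exacts [.inl (hD g hg x x' e g' h), .inr (hD' g hg x x' e g' h)]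

theorem insert_tt (hD : ReductClosed k D) : ReductClosed k (insert (.base .tt) D) := by
  rw [Set.insert_eq]
  exact (singleton_tt k).union hD

theorem insert {g : F P E} (hD : ReductClosed k D)
    (hg : ∀ (x x' : k.X) (e : E) (g' : F P E), Step0 k (x, g) e (x', g') → g' ∈ insert g D) :
    ReductClosed k (insert g D) := by
  rintro h (rfl | hh) x x' e g' hstep
  exacts [hg x x' e g' hstep, .inr (hD h hh x x' e g' hstep)]

theorem union_image2_and (hD : ReductClosed k D) (hD' : ReductClosed k D') :
    ReductClosed k (D ∪ Set.image2 .and D D') := by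
  rintro _ (hg | ⟨g, hg, h, hh, rfl⟩) x x' e g' hstep
  · exact .inl (hD _ hg x x' e g' hstep)
  cases hstep with
  | and_sub hg' _ _ => exact .inl (hD g hg x x' e _ hg')
  | and_nsub hg' hh' _ =>
    exact .inr (Set.mem_image2_of_mem (hD g hg x x' e _ hg') (hD' h hh x x' e _ hh'))

theorem image_andList_inv {f : F P E} (hD : ReductClosed k D) (hf : f ∈ D) :
    ReductClosed k (andList (.inv f) '' {l | l.Nodup ∧ ∀ a ∈ l, a ∈ D}) := by
  rintro _ ⟨l, ⟨hnd, hl⟩, rfl⟩ x x' e g' hstep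
  induction l using List.reverseRecOn generalizing g' with
  | nil =>
    cases hstep with
    | inv_sub => exact ⟨[], by simp, rfl⟩
    | inv_nsub hf' => exact ⟨[_], by simpa using hD f hf x x' e _ hf', rfl⟩
  | append_singleton l a ih =>
    rw [andList_concat] at hstep
    have hnd' : l.Nodup := (List.nodup_append.1 hnd).1
    have hl' : ∀ b ∈ l, b ∈ D := fun b hb => hl b (by simp [hb])
    cases hstep with
    | and_sub hstep _ _ => exact ih hnd' hl' _ hstep
    | @and_nsub _ _ _ _ _ _ a' hstep ha' hnsub =>
      obtain ⟨m, ⟨hmnd, hm⟩, rfl⟩ := ih hnd' hl' _ hstep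
      have ha'D : a' ∈ D := hD a (hl a (by simp)) x x' e a' ha'
      have ha'm : a' ∉ m := fun h => hnsub (subF_andList_of_mem _ h)
      refine ⟨m ++ [a'], ⟨?_, ?_⟩, andList_concat _ _ _⟩
      · exact hmnd.append (List.nodup_singleton a') (List.disjoint_singleton.2 ha'm)
      · simpa [or_imp, forall_and] using ⟨hm, ha'D⟩

end ReductClosed

theorem reductClosed_reducts (k : KLTS P E) (f : F P E) : ReductClosed k (reducts f) := by
  induction f with
  | base =>
    refine (ReductClosed.singleton_tt k).insert fun x x' e g' h => ?_
    cases h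
    simp
  | and f g ihf ihg => exact ihf.union_image2_and ihg
  | or _ f ih =>
    refine ih.insert_tt.insert fun x x' e g' h => ?_
    cases h with
    | or_true => simp
    | or_step h => exact .inr (.inr (ih f (mem_reducts_self f) x x' e g' h))
  | box _ f ih =>
    refine ih.insert_tt.insert fun x x' e g' h => ?_
    cases h <;> simp [mem_reducts_self]
  | dia _ f ih =>
    refine ih.insert_tt.insert fun x x' e g' h => ?_
    cases h <;> simp [mem_reducts_self]
  | inv f ih => exact ih.image_andList_inv (mem_reducts_self f)
  | reach =>
    refine (ReductClosed.singleton_tt k).insert fun x x' e g' h => ?_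
    cases h <;> simp
  | dlf =>
    refine (ReductClosed.singleton_tt k).insert fun x x' e g' h => ?_
    cases h
    simp

/-- Every formula has a finite, reduction-closed set of reducts. -/
theorem reducts_finite {P E : Type} (k : KLTS P E) (f : F P E) :
    ∃ D : Set (F P E), D.Finite ∧ f ∈ D ∧
      ∀ g ∈ D, ∀ (x x' : k.X) (e : E) (g' : F P E),
        Step0 k (x, g) e (x', g') → g' ∈ D :=
  ⟨reducts f, finite_reducts f, mem_reducts_self f, reductClosed_reducts k f⟩
end

section
/- Uncontrollable transitions are never removed by synthesis: if (x,f) ↑ f and x →_e x' with e uncontrollable, then there exists f' such that (x,f) →_n^e (x',f') for all n ∈ ℕ. -/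
variable {P E : Type}

/-! Every formula constructor has a `Step0` rule firing on any plant step, so by structural
induction each plant step lifts to `Step0` from every formula. The iterates `StepN` only ever
prune controllable events, so an uncontrollable lifted step survives every iteration. -/

theorem Step0.exists_of_T (k : KLTS P E) {x x' : k.X} {e : E} (hstep : k.T x e x')
    (f : F P E) : ∃ f', Step0 k (x, f) e (x', f') := by
  induction f with
  | base b => exact ⟨_, .base hstep⟩
  | and f g ihf ihg =>
    obtain ⟨f', hf⟩ := ihf
    obtain ⟨g', hg⟩ := ihg
    by_cases hsub : SubF g' f'
    · exact ⟨_, .and_sub hf hg hsub⟩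
    · exact ⟨_, .and_nsub hf hg hsub⟩
  | or b f ih =>
    obtain ⟨f', hf⟩ := ih
    exact ⟨_, .or_step hf⟩
  | box e' f =>
    by_cases he : e = e'
    · subst he
      exact ⟨_, .box_same hstep⟩
    · exact ⟨_, .box_other hstep he⟩
  | dia e' f => exact ⟨_, .dia_other hstep⟩
  | inv f ih =>
    obtain ⟨f', hf⟩ := ih
    by_cases hsub : SubF f' (.inv f)
    · exact ⟨_, .inv_sub hf hsub⟩
    · exact ⟨_, .inv_nsub hf hsub⟩
  | reach b => exact ⟨_, .reach_true hstep⟩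
  | dlf => exact ⟨_, .dlf hstep⟩

theorem StepN.succ_of_mem (k : KLTS P E) (U : Set E) {n : ℕ} {p p' : k.X × F P E} {e : E}
    (h : StepN k U n p e p') (he : e ∈ U) : StepN k U (n + 1) p e p' :=
  ⟨h, Or.inl he⟩

theorem StepN.of_step0_of_mem (k : KLTS P E) (U : Set E) {p p' : k.X × F P E} {e : E}
    (h : Step0 k p e p') (he : e ∈ U) : ∀ n, StepN k U n p e p'
  | 0 => h
  | n + 1 => (StepN.of_step0_of_mem k U h he n).succ_of_mem k U he

theorem uncontrollable_persist_general {P E : Type} (k : KLTS P E) (U : Set E)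
    (x x' : k.X) (e : E) (f : F P E)
    (hstep : k.T x e x') (he : e ∈ U) :
    ∃ f' : F P E, ∀ n : ℕ, StepN k U n (x, f) e (x', f') := by
  obtain ⟨f', hf⟩ := Step0.exists_of_T k hstep f
  exact ⟨f', StepN.of_step0_of_mem k U hf he⟩

/-- Uncontrollable transitions are never removed (Lemma syn_impl_rel). -/
theorem uncontrollable_persist {P E : Type} (k : KLTS P E) (U : Set E)
    (x x' : k.X) (e : E) (f : F P E)
    (hsyn : Syn k (Step0 k) (x, f) f) (hstep : k.T x e x') (he : e ∈ U) :
    ∃ f' : F P E, ∀ n : ℕ, StepN k U n (x, f) e (x', f') :=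
  uncontrollable_persist_general k U x x' e f hstep he
end

section
/- Validity of a complete synthesis result (Theorem val): if the n-th synthesis iterate S^n_{k,f} is complete, then S^n_{k,f} ⊨ f. More generally, if S^n_{k,g} is complete and f ∈ part(x, g), then S^n_{k,g} ⊨ f. -/
variable {P E : Type}

/-! Validity is proved by induction on `f`, at every reachable pair `(x, g)` of which `f` is a part
(at `x`). Completeness gives `Syn` of the whole formula `g` there, and `Syn` descends to parts, which
settles the base, diamond, reachability and deadlock-freedom cases. The box and invariant cases instead
follow parts along transitions: along an `e`-labelled `Step0`-transition `(x, g) → (x', g')`, a part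
`box e f` of `g` leaves `f` as a part of `g'`, and a part `inv f` of `g` stays a part of `g'`. -/

section PartF

variable {X : Type} {L : X → Set P} {x : X}

theorem PartF.trans {f g h : F P E} (hfg : PartF L x f g) (hgh : PartF L x g h) :
    PartF L x f h := by
  induction hgh with
  | refl => exact hfg
  | andL _ ih => exact .andL (ih hfg)
  | andR _ ih => exact .andR (ih hfg)
  | or hb _ ih => exact .or hb (ih hfg)
  | inv _ ih => exact .inv (ih hfg)

theorem SubF.partF {f g : F P E} (h : SubF f g) : PartF L x f g := by
  induction h with
  | refl => exact .refl _
  | andL _ ih => exact .andL ih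
  | andR _ ih => exact .andR ih
  | inv _ ih => exact .inv ih

end PartF

section Synthesis

variable {k : KLTS P E}

theorem Syn.of_partF {Tn : k.X × F P E → E → k.X × F P E → Prop} {p : k.X × F P E}
    {f g : F P E} (hs : Syn k Tn p g) (hp : PartF k.L p.1 f g) : Syn k Tn p f := by
  induction hp with
  | refl => exact hs
  | andL _ ih => cases hs with | and hs _ => exact ih hs
  | andR _ ih => cases hs with | and _ hs => exact ih hs
  | or hb _ ih =>
    cases hs with
    | orl hb' => exact absurd hb' hb
    | orr hs => exact ih hs
  | inv _ ih => cases hs with | inv hs => exact ih hs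

theorem StepN.step0 {U : Set E} :
    ∀ {n : ℕ} {p : k.X × F P E} {e : E} {p' : k.X × F P E},
      StepN k U n p e p' → Step0 k p e p'
  | 0, _, _, _, h => h
  | _ + 1, _, _, _, h => StepN.step0 h.1

theorem Step0.partF_box {p p' : k.X × F P E} {e : E} {f : F P E} (hs : Step0 k p e p')
    (hp : PartF k.L p.1 (.box e f) p.2) : PartF k.L p'.1 f p'.2 := by
  induction hs with
  | and_sub _ _ hsub ih₁ ih₂ =>
    cases hp with
    | andL hp => exact ih₁ hp
    | andR hp => exact (ih₂ hp).trans hsub.partF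
  | and_nsub _ _ _ ih₁ ih₂ =>
    cases hp with
    | andL hp => exact .andL (ih₁ hp)
    | andR hp => exact .andR (ih₂ hp)
  | or_true _ hb => cases hp with | or hnb _ => exact absurd hb hnb
  | or_step _ ih => cases hp with | or _ hp => exact ih hp
  | box_same => cases hp; exact .refl _
  | box_other _ hne => cases hp; exact absurd rfl hne
  | inv_sub _ hsub ih => cases hp with | inv hp => exact (ih hp).trans hsub.partF
  | inv_nsub _ _ ih => cases hp with | inv hp => exact .andR (ih hp)
  | _ => cases hp

theorem Step0.partF_inv {p p' : k.X × F P E} {e : E} {f : F P E} (hs : Step0 k p e p')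
    (hp : PartF k.L p.1 (.inv f) p.2) : PartF k.L p'.1 (.inv f) p'.2 := by
  induction hs with
  | and_sub _ _ hsub ih₁ ih₂ =>
    cases hp with
    | andL hp => exact ih₁ hp
    | andR hp => exact (ih₂ hp).trans hsub.partF
  | and_nsub _ _ _ ih₁ ih₂ =>
    cases hp with
    | andL hp => exact .andL (ih₁ hp)
    | andR hp => exact .andR (ih₂ hp)
  | or_true _ hb => cases hp with | or hnb _ => exact absurd hb hnb
  | or_step _ ih => cases hp with | or _ hp => exact ih hp
  | inv_sub _ hsub ih =>
    cases hp with
    | refl => exact .refl _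
    | inv hp => exact (ih hp).trans hsub.partF
  | inv_nsub _ _ ih =>
    cases hp with
    | refl => exact .andL (.refl _)
    | inv hp => exact .andR (ih hp)
  | _ => cases hp

variable {U : Set E} {n : ℕ}

abbrev SynthAt (k : KLTS P E) (U : Set E) (n : ℕ) (p : k.X × F P E) : KLTS P E :=
  ⟨k.X × F P E, fun q => k.L q.1, StepN k U n, p⟩

theorem partF_inv_of_star {f : F P E} {p q : k.X × F P E} (h : (SynthAt k U n p).Star p q)
    (hp : PartF k.L p.1 (.inv f) p.2) : PartF k.L q.1 (.inv f) q.2 := by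
  induction h with
  | refl => exact hp
  | tail _ hstep ih =>
    obtain ⟨_, hs⟩ := hstep
    exact hs.step0.partF_inv ih

theorem fsat_synthAt_of_complete {g : F P E} (hc : Complete k U n g) (f : F P E)
    {p : k.X × F P E} (hr : (Synth k U g n).Star (k.init, g) p) (hp : PartF k.L p.1 f p.2) :
    FSat (SynthAt k U n p) f := by
  induction f generalizing p with
  | base b =>
    cases (hc p hr).of_partF hp with | base hb => exact hb
  | and f₁ f₂ ih₁ ih₂ =>
    exact ⟨ih₁ hr ((PartF.andL (.refl _)).trans hp), ih₂ hr ((PartF.andR (.refl _)).trans hp)⟩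
  | or b f ih =>
    by_cases hb : BSat (k.L p.1) b
    · exact .inl hb
    · exact .inr (ih hr ((PartF.or hb (.refl _)).trans hp))
  | box e f ih =>
    intro p' hs
    exact ih (hr.tail ⟨e, hs⟩) (hs.step0.partF_box hp)
  | dia e f ih =>
    cases (hc p hr).of_partF hp with
    | dia _ hs hpart => exact ⟨_, hs, ih (hr.tail ⟨e, hs⟩) hpart⟩
  | inv f ih =>
    intro p' hstar
    exact ih (hr.trans hstar) ((PartF.inv (.refl f)).trans (partF_inv_of_star hstar hp))
  | reach b =>
    cases (hc p hr).of_partF hp with | reach hstar hb => exact ⟨_, hstar, hb⟩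
  | dlf =>
    cases (hc p hr).of_partF hp with | dlf hs => exact ⟨_, _, hs⟩

end Synthesis

/-- Validity of a complete synthesis result (Theorem val). -/
theorem synthesis_valid {P E : Type} (k : KLTS P E) (U : Set E) (n : ℕ) :
    (∀ f : F P E, Complete k U n f → FSat (Synth k U f n) f) ∧
      (∀ f g : F P E, Complete k U n g → PartF k.L k.init f g →
        FSat (Synth k U g n) f) :=
  ⟨fun f hc => fsat_synthAt_of_complete hc f .refl (.refl f),
    fun f _ hc hp => fsat_synthAt_of_complete hc f .refl hp⟩
end

section
/- Controllability of the synthesis result (Theorem pbis): if S^n_{k,f} is complete, then S^n_{k,f} ≼≈ k, i.e., the synthesis result is related to the original plant by partial bisimulation. -/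
variable {P E : Type}

/-! Synthesis only ever prunes controllable transitions, and every plant transition lifts to the
starting relation from any formula component. Hence projecting a state-formula pair to its plant
state is a partial bisimulation. -/

namespace Step0

variable {k : KLTS P E}

theorem plant_step {p p' : k.X × F P E} {e : E} (h : Step0 k p e p') : k.T p.1 e p'.1 := by
  induction h <;> assumption

theorem exists_lift {y z : k.X} {e : E} (ht : k.T y e z) (g : F P E) :
    ∃ g', Step0 k (y, g) e (z, g') := by
  induction g with
  | base b => exact ⟨_, .base ht⟩
  | and f g ihf ihg =>
    obtain ⟨f', hf⟩ := ihf
    obtain ⟨g', hg⟩ := ihg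
    by_cases hsub : SubF g' f'
    · exact ⟨_, .and_sub hf hg hsub⟩
    · exact ⟨_, .and_nsub hf hg hsub⟩
  | or b f ih =>
    obtain ⟨f', hf⟩ := ih
    exact ⟨_, .or_step hf⟩
  | box e' f =>
    by_cases he : e = e'
    · subst he
      exact ⟨_, .box_same ht⟩
    · exact ⟨_, .box_other ht he⟩
  | dia e' f => exact ⟨_, .dia_other ht⟩
  | inv f ih =>
    obtain ⟨f', hf⟩ := ih
    by_cases hsub : SubF f' (.inv f)
    · exact ⟨_, .inv_sub hf hsub⟩
    · exact ⟨_, .inv_nsub hf hsub⟩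
  | reach b => exact ⟨_, .reach_true ht⟩
  | dlf => exact ⟨_, .dlf ht⟩

end Step0

namespace StepN

variable {k : KLTS P E} {U : Set E}

theorem plant_step {n : ℕ} {p p' : k.X × F P E} {e : E} (h : StepN k U n p e p') :
    k.T p.1 e p'.1 := by
  induction n with
  | zero => exact Step0.plant_step h
  | succ n ih => exact ih h.1

theorem exists_lift_of_mem {n : ℕ} {y z : k.X} {e : E} (hU : e ∈ U) (ht : k.T y e z)
    (g : F P E) : ∃ g', StepN k U n (y, g) e (z, g') := by
  induction n with
  | zero => exact Step0.exists_lift ht g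
  | succ n ih =>
    obtain ⟨g', hg⟩ := ih
    exact ⟨g', hg, .inl hU⟩

end StepN

theorem pbisRel_synth_fst (k : KLTS P E) (U : Set E) (f : F P E) (n : ℕ) :
    PBisRel U (Synth k U f n) k (fun p y => p.1 = y) := by
  rintro p _ rfl
  refine ⟨rfl, fun e p' hp' => ⟨p'.1, StepN.plant_step hp', rfl⟩, fun e z hU ht => ?_⟩
  obtain ⟨g', hg'⟩ := StepN.exists_lift_of_mem (n := n) hU ht p.2
  exact ⟨(z, g'), hg', rfl⟩

theorem synthesis_controllable_general {P E : Type} (k : KLTS P E) (U : Set E)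
    (n : ℕ) (f : F P E) :
    PBis U (Synth k U f n) k :=
  ⟨_, rfl, pbisRel_synth_fst k U f n⟩

/-- Controllability of the synthesis result (Theorem pbis). -/
theorem synthesis_controllable {P E : Type} (k : KLTS P E) (U : Set E)
    (n : ℕ) (f : F P E) (hc : Complete k U n f) :
    PBis U (Synth k U f n) k :=
  synthesis_controllable_general k U n f
end

section
/- Step matching for valid simulants (Lemma step_val): if k' ≼ k, k' ⊨ f, x' →'_e y' and x →_e y (with x', x the respective initial states and the two steps related by the simulation), then there exists f' ∈ F such that (X',L',→',y') ⊨ f' and (x,f) →_0^e (y,f'). -/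
variable {P E : Type}

/-! Induction on the formula. Every rule of `Step0` reduces a formula either to `true`, to a
subformula whose validity after the step is read off from the semantics of `[e]` and `□`, or to a
combination of the reducts of its parts; in the last case the sub-formula test only decides whether
the second reduct is kept as a conjunct, and validity survives either way. For `b ∨ f` with `b`
true in `k'`, the rule `or_true` needs `b` at the initial state of `k`, which carries the same
labels. -/

namespace FSat

variable {k : KLTS P E} {f : F P E}

theorem of_inv_s17 (h : FSat k (.inv f)) : FSat k f :=
  h k.init .refl

theorem inv_of_step {e : E} {y : k.X} (h : FSat k (.inv f)) (hy : k.T k.init e y) :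
    FSat ⟨k.X, k.L, k.T, y⟩ (.inv f) :=
  fun z hz => h z (.head ⟨e, hy⟩ hz)

end FSat

section Reducts

variable {k k₂ : KLTS P E} {x y : k.X} {e : E}

theorem exists_valid_and_reduct {f g f' g' : F P E}
    (hf : Step0 k (x, f) e (y, f')) (hg : Step0 k (x, g) e (y, g'))
    (hf' : FSat k₂ f') (hg' : FSat k₂ g') :
    ∃ h : F P E, FSat k₂ h ∧ Step0 k (x, .and f g) e (y, h) := by
  by_cases hsub : SubF g' f'
  · exact ⟨f', hf', .and_sub hf hg hsub⟩
  · exact ⟨.and f' g', ⟨hf', hg'⟩, .and_nsub hf hg hsub⟩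

theorem exists_valid_inv_reduct {f f' : F P E}
    (hf : Step0 k (x, f) e (y, f')) (hinv : FSat k₂ (.inv f)) (hf' : FSat k₂ f') :
    ∃ h : F P E, FSat k₂ h ∧ Step0 k (x, .inv f) e (y, h) := by
  by_cases hsub : SubF f' (.inv f)
  · exact ⟨.inv f, hinv, .inv_sub hf hsub⟩
  · exact ⟨.and (.inv f) f', ⟨hinv, hf'⟩, .inv_nsub hf hsub⟩

end Reducts

theorem exists_valid_reduct {k' k : KLTS P E} (hL : k'.L k'.init = k.L k.init)
    {f : F P E} (hv : FSat k' f) {e : E} {y' : k'.X} {y : k.X}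
    (hstep' : k'.T k'.init e y') (hstep : k.T k.init e y) :
    ∃ f' : F P E, FSat ⟨k'.X, k'.L, k'.T, y'⟩ f' ∧ Step0 k (k.init, f) e (y, f') := by
  induction f with
  | base b => exact ⟨.base .tt, trivial, .base hstep⟩
  | and f g ihf ihg =>
    obtain ⟨f', hf', sf⟩ := ihf hv.1
    obtain ⟨g', hg', sg⟩ := ihg hv.2
    exact exists_valid_and_reduct sf sg hf' hg'
  | or b f ih =>
    rcases hv with hb | hf
    · exact ⟨.base .tt, trivial, .or_true hstep (hL ▸ hb)⟩
    · obtain ⟨f', hf', sf⟩ := ih hf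
      exact ⟨f', hf', .or_step sf⟩
  | box e' f =>
    by_cases he : e = e'
    · subst he
      exact ⟨f, hv y' hstep', .box_same hstep⟩
    · exact ⟨.base .tt, trivial, .box_other hstep he⟩
  -- `dia_other` carries no side condition `e ≠ e'`.
  | dia => exact ⟨.base .tt, trivial, .dia_other hstep⟩
  | inv f ih =>
    obtain ⟨f', hf', sf⟩ := ih hv.of_inv_s17
    exact exists_valid_inv_reduct sf (hv.inv_of_step hstep') hf'
  | reach => exact ⟨.base .tt, trivial, .reach_true hstep⟩
  | dlf => exact ⟨.base .tt, trivial, .dlf hstep⟩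

theorem step_val_general {P E : Type} (k' k : KLTS P E) (R : k'.X → k.X → Prop)
    (hR : SimRel k' k R) (hinit : R k'.init k.init)
    (f : F P E) (hv : FSat k' f)
    (e : E) (y' : k'.X) (y : k.X)
    (hstep' : k'.T k'.init e y') (hstep : k.T k.init e y) :
    ∃ f' : F P E, FSat ⟨k'.X, k'.L, k'.T, y'⟩ f' ∧
      Step0 k (k.init, f) e (y, f') :=
  exists_valid_reduct (hR _ _ hinit).1 hv hstep' hstep

/-- Step matching for valid simulants (Lemma step_val). -/
theorem step_val {P E : Type} (k' k : KLTS P E) (R : k'.X → k.X → Prop)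
    (hR : SimRel k' k R) (hinit : R k'.init k.init)
    (f : F P E) (hv : FSat k' f)
    (e : E) (y' : k'.X) (y : k.X)
    (hstep' : k'.T k'.init e y') (hstep : k.T k.init e y) (hRy : R y' y) :
    ∃ f' : F P E, FSat ⟨k'.X, k'.L, k'.T, y'⟩ f' ∧
      Step0 k (k.init, f) e (y, f') :=
  step_val_general k' k R hR hinit f hv e y' y hstep' hstep
end
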